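/- arXiv:2308.12353 — 2 statements merged into one kernel-verified Lean document; each statement's English description precedes it below -/
import Mathlib

section
/- For each θ ∈ ℝ, the numerical range of the 2×2 matrix Φ(θ) = [[e^{iθ}, -1],[2e^{iθ}, e^{iθ}]] is a closed elliptical disk centered at e^{iθ}, and every point z in W(Φ(θ)) satisfies H(Re z, Im z; θ) ≤ 0, where H(X,Y;θ) = (16X² - 16Y² - 40X + 16)cos θ + (32XY - 40Y)sin θ + (20X² + 20Y² - 32X + 11) - 0; moreover the boundary of W(Φ(θ)) is {(X,Y) : (20+16cos θ)(X-cos θ)² + (20-16cos θ)(Y-sin θ)² + 32 sin θ (X-cos θ)(Y-sin θ) = 9}. -/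
/-!
For a unit vector `x`, `⟨Φ(θ)x, x⟩ = e^{iθ} + 2e^{iθ}a - ā` with `a = x̄₁x₀`, and `a` ranges exactly
over the disc `|a| ≤ 1/2`. Since `|2e^{iθ}| ≠ |-1|`, the map `a ↦ 2e^{iθ}a - ā` is an `ℝ`-linear
bijection, so `W(Φ(θ))` is the image of that disc under an affine homeomorphism of `ℂ`, and its
boundary is the image of the circle `|a| = 1/2`. In the coordinate `a`, `H` becomes `36|a|² - 9`
and the quadratic form of the ellipse becomes `36|a|²`.
-/

open Complex Matrix

/-- The numerical range of a square complex matrix. -/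
def numericalRange {k : Type*} [Fintype k] (M : Matrix k k ℂ) : Set ℂ :=
  {z | ∃ x : k → ℂ, (∑ i, ‖x i‖ ^ 2 = 1) ∧ z = dotProduct (star x) (M.mulVec x)}

/-- The symbol matrix Φ(θ). -/
noncomputable def PhiMat (θ : ℝ) : Matrix (Fin 2) (Fin 2) ℂ :=
  Matrix.of ![![Complex.exp (I * θ), -1], ![2 * Complex.exp (I * θ), Complex.exp (I * θ)]]

/-- H(X,Y;θ). -/
noncomputable def Hfun (X Y θ : ℝ) : ℝ :=
  (16 * X ^ 2 - 16 * Y ^ 2 - 40 * X + 16) * Real.cos θ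
    + (32 * X * Y - 40 * Y) * Real.sin θ
    + (20 * X ^ 2 + 20 * Y ^ 2 - 32 * X + 11)

open ComplexConjugate

lemma exists_pos_sq_sub_pow_four_eq {m : ℝ} (hm : m ≤ 1 / 4) :
    ∃ r : ℝ, 0 < r ∧ r ^ 2 - r ^ 4 = m := by
  set s := √(1 - 4 * m)
  have hs₀ : 0 ≤ s := Real.sqrt_nonneg _
  have hs : s ^ 2 = 1 - 4 * m := Real.sq_sqrt (by linarith)
  refine ⟨√((1 + s) / 2), Real.sqrt_pos.2 (by linarith), ?_⟩
  rw [show (4 : ℕ) = 2 * 2 from rfl, pow_mul, Real.sq_sqrt (by linarith)]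
  linear_combination (-1 / 4 : ℝ) * hs

lemma image_conj_mul_unitSphere :
    (fun x : Fin 2 → ℂ => conj (x 1) * x 0) '' {x | ∑ i, ‖x i‖ ^ 2 = 1} =
      Metric.closedBall 0 (1 / 2) := by
  ext a
  simp only [Set.mem_image, Set.mem_ofPred_eq, Fin.sum_univ_two, mem_closedBall_zero_iff]
  constructor
  · rintro ⟨x, hx, rfl⟩
    rw [norm_mul, RCLike.norm_conj]
    nlinarith [sq_nonneg (‖x 0‖ - ‖x 1‖)]
  · intro ha
    obtain ⟨r, hr, hr4⟩ := exists_pos_sq_sub_pow_four_eq (m := ‖a‖ ^ 2)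
      (by nlinarith [norm_nonneg a])
    refine ⟨![a / r, r], ?_, ?_⟩
    · simp only [Matrix.cons_val_zero, Matrix.cons_val_one, norm_div, norm_real,
        Real.norm_of_nonneg hr.le, div_pow]
      field_simp
      linear_combination -hr4
    · simp only [Matrix.cons_val_zero, Matrix.cons_val_one, conj_ofReal]
      exact mul_div_cancel₀ a (ofReal_ne_zero.2 hr.ne')

noncomputable def mulAddMulConj (c b : ℂ) : ℂ →ₗ[ℝ] ℂ :=
  c • LinearMap.id + b • conjLIE.toLinearEquiv.toLinearMap

lemma mulAddMulConj_apply (c b a : ℂ) : mulAddMulConj c b a = c * a + b * conj a := rfl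

lemma mulAddMulConj_injective {c b : ℂ} (h : ‖b‖ ≠ ‖c‖) :
    Function.Injective (mulAddMulConj c b) := by
  refine (injective_iff_map_eq_zero _).2 fun a ha => ?_
  rw [mulAddMulConj_apply, add_eq_zero_iff_eq_neg] at ha
  have hnorm := congrArg norm ha
  rw [norm_mul, norm_neg, norm_mul, RCLike.norm_conj] at hnorm
  have : (‖c‖ - ‖b‖) * ‖a‖ = 0 := by linarith
  exact norm_eq_zero.1 <| (mul_eq_zero.1 this).resolve_left (sub_ne_zero.2 h.symm)

noncomputable def affineMulAddMulConj (d : ℂ) {c b : ℂ} (h : ‖b‖ ≠ ‖c‖) : ℂ ≃ₜ ℂ :=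
  (LinearEquiv.ofInjectiveEndo _ (mulAddMulConj_injective h)).toContinuousLinearEquiv
    |>.toHomeomorph.trans (Homeomorph.addLeft d)

lemma affineMulAddMulConj_apply (d : ℂ) {c b : ℂ} (h : ‖b‖ ≠ ‖c‖) (a : ℂ) :
    affineMulAddMulConj d h a = d + mulAddMulConj c b a := rfl

section EqDiag

variable (d b c : ℂ)

lemma star_dotProduct_mulVec_of_eq_diag {x : Fin 2 → ℂ} (hx : ∑ i, ‖x i‖ ^ 2 = 1) :
    star x ⬝ᵥ (!![d, b; c, d] *ᵥ x) = d + mulAddMulConj c b (conj (x 1) * x 0) := by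
  have hx' : conj (x 0) * x 0 + conj (x 1) * x 1 = 1 := by
    simp only [conj_mul', ← ofReal_pow, ← ofReal_add]
    exact_mod_cast (Fin.sum_univ_two _).symm.trans hx
  simp only [dotProduct, mulVec, Fin.sum_univ_two, Matrix.of_apply, Matrix.cons_val',
    Matrix.cons_val_zero, Matrix.cons_val_one, Matrix.empty_val',
    Matrix.cons_val_fin_one, Pi.star_apply, RCLike.star_def, mulAddMulConj_apply, map_mul,
    conj_conj]
  linear_combination d * hx'

lemma numericalRange_of_eq_diag :
    numericalRange !![d, b; c, d] =
      (fun a => d + mulAddMulConj c b a) '' Metric.closedBall 0 (1 / 2) := by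
  rw [← image_conj_mul_unitSphere, Set.image_image]
  ext z
  constructor
  · rintro ⟨x, hx, rfl⟩
    exact ⟨x, hx, (star_dotProduct_mulVec_of_eq_diag d b c hx).symm⟩
  · rintro ⟨x, hx, rfl⟩
    exact ⟨x, hx, (star_dotProduct_mulVec_of_eq_diag d b c hx).symm⟩

lemma isCompact_numericalRange_of_eq_diag : IsCompact (numericalRange !![d, b; c, d]) := by
  rw [numericalRange_of_eq_diag]
  exact (isCompact_closedBall _ _).image <|
    continuous_const.add (mulAddMulConj c b).continuous_of_finiteDimensional

lemma convex_numericalRange_of_eq_diag : Convex ℝ (numericalRange !![d, b; c, d]) := by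
  rw [numericalRange_of_eq_diag, ← Set.image_image (d + ·)]
  exact ((convex_closedBall _ _).linear_image _).translate d

lemma two_mul_sub_mem_numericalRange_of_eq_diag {z : ℂ}
    (hz : z ∈ numericalRange !![d, b; c, d]) : 2 * d - z ∈ numericalRange !![d, b; c, d] := by
  rw [numericalRange_of_eq_diag] at hz ⊢
  obtain ⟨a, ha, rfl⟩ := hz
  refine ⟨-a, by simpa using ha, ?_⟩
  simp only [map_neg]
  ring

lemma mem_numericalRange_of_eq_diag_iff_two_mul_sub {z : ℂ} :
    z ∈ numericalRange !![d, b; c, d] ↔ 2 * d - z ∈ numericalRange !![d, b; c, d] :=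
  ⟨two_mul_sub_mem_numericalRange_of_eq_diag d b c, fun h => by
    simpa using two_mul_sub_mem_numericalRange_of_eq_diag d b c h⟩

end EqDiag

lemma frontier_numericalRange_of_eq_diag (d : ℂ) {b c : ℂ} (h : ‖b‖ ≠ ‖c‖) :
    frontier (numericalRange !![d, b; c, d]) =
      affineMulAddMulConj d h '' Metric.sphere 0 (1 / 2) := by
  rw [numericalRange_of_eq_diag, ← funext (affineMulAddMulConj_apply d h),
    ← Homeomorph.image_frontier, frontier_closedBall _ one_half_pos.ne']

noncomputable def phiEllipseForm (θ : ℝ) (z : ℂ) : ℝ :=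
  (20 + 16 * Real.cos θ) * (z.re - Real.cos θ) ^ 2
    + (20 - 16 * Real.cos θ) * (z.im - Real.sin θ) ^ 2
    + 32 * Real.sin θ * (z.re - Real.cos θ) * (z.im - Real.sin θ)

section PhiCoordinates

variable (θ : ℝ) (a : ℂ)

lemma re_exp_add_mulAddMulConj :
    (exp (I * θ) + mulAddMulConj (2 * exp (I * θ)) (-1) a).re =
      Real.cos θ + (2 * Real.cos θ - 1) * a.re - 2 * Real.sin θ * a.im := by
  simp only [mulAddMulConj_apply, mul_comm I, exp_mul_I, ← ofReal_cos, ← ofReal_sin, add_re,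
    add_im, mul_re, mul_im, neg_re, neg_im, one_re, one_im, conj_re, conj_im, ofReal_re, ofReal_im,
    I_re, I_im, re_ofNat, im_ofNat]
  ring

lemma im_exp_add_mulAddMulConj :
    (exp (I * θ) + mulAddMulConj (2 * exp (I * θ)) (-1) a).im =
      Real.sin θ + 2 * Real.sin θ * a.re + (2 * Real.cos θ + 1) * a.im := by
  simp only [mulAddMulConj_apply, mul_comm I, exp_mul_I, ← ofReal_cos, ← ofReal_sin, add_im,
    add_re, mul_re, mul_im, neg_re, neg_im, one_re, one_im, conj_re, conj_im, ofReal_re,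
    ofReal_im, I_re, I_im, re_ofNat, im_ofNat]
  ring

lemma Hfun_exp_add_mulAddMulConj :
    Hfun (exp (I * θ) + mulAddMulConj (2 * exp (I * θ)) (-1) a).re
      (exp (I * θ) + mulAddMulConj (2 * exp (I * θ)) (-1) a).im θ = 36 * ‖a‖ ^ 2 - 9 := by
  rw [re_exp_add_mulAddMulConj, im_exp_add_mulAddMulConj, Complex.sq_norm, normSq_apply, Hfun]
  linear_combination (-20 + 16 * a.im ^ 2 - 32 * a.re + 16 * a.re ^ 2 - 64 * Real.sin θ * a.im
    - 128 * Real.sin θ * a.re * a.im + 16 * Real.cos θ - 64 * Real.cos θ * a.im ^ 2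
    + 64 * Real.cos θ * a.re + 64 * Real.cos θ * a.re ^ 2) * Real.sin_sq_add_cos_sq θ

lemma phiEllipseForm_exp_add_mulAddMulConj :
    phiEllipseForm θ (exp (I * θ) + mulAddMulConj (2 * exp (I * θ)) (-1) a) = 36 * ‖a‖ ^ 2 := by
  rw [phiEllipseForm, re_exp_add_mulAddMulConj, im_exp_add_mulAddMulConj, Complex.sq_norm,
    normSq_apply]
  linear_combination (16 * a.im ^ 2 + 16 * a.re ^ 2 - 128 * Real.sin θ * a.re * a.im
    - 64 * Real.cos θ * a.im ^ 2 + 64 * Real.cos θ * a.re ^ 2) * Real.sin_sq_add_cos_sq θ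

end PhiCoordinates

theorem numericalRange_PhiMat (θ : ℝ) :
    IsClosed (numericalRange (PhiMat θ)) ∧
    Convex ℝ (numericalRange (PhiMat θ)) ∧
    (∀ z : ℂ, z ∈ numericalRange (PhiMat θ) ↔
        2 * Complex.exp (I * θ) - z ∈ numericalRange (PhiMat θ)) ∧
    (∀ z ∈ numericalRange (PhiMat θ), Hfun z.re z.im θ ≤ 0) ∧
    frontier (numericalRange (PhiMat θ)) =
      {z : ℂ | (20 + 16 * Real.cos θ) * (z.re - Real.cos θ) ^ 2
          + (20 - 16 * Real.cos θ) * (z.im - Real.sin θ) ^ 2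
          + 32 * Real.sin θ * (z.re - Real.cos θ) * (z.im - Real.sin θ) = 9} := by
  have hPhi : PhiMat θ = !![exp (I * θ), -1; 2 * exp (I * θ), exp (I * θ)] := rfl
  have hnorm : ‖(-1 : ℂ)‖ ≠ ‖2 * exp (I * θ)‖ := by
    rw [norm_neg, norm_one, norm_mul, mul_comm I, norm_exp_ofReal_mul_I]
    norm_num
  rw [hPhi]
  refine ⟨(isCompact_numericalRange_of_eq_diag _ _ _).isClosed,
    convex_numericalRange_of_eq_diag _ _ _,
    fun z => mem_numericalRange_of_eq_diag_iff_two_mul_sub _ _ _, ?_, ?_⟩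
  · rw [numericalRange_of_eq_diag]
    rintro _ ⟨a, ha, rfl⟩
    rw [Hfun_exp_add_mulAddMulConj]
    nlinarith [mem_closedBall_zero_iff.1 ha, norm_nonneg a]
  · rw [frontier_numericalRange_of_eq_diag _ hnorm]
    ext z
    obtain ⟨a, rfl⟩ := (affineMulAddMulConj (exp (I * θ)) hnorm).surjective z
    change _ ↔ phiEllipseForm θ _ = 9
    rw [(affineMulAddMulConj _ hnorm).injective.mem_set_image, mem_sphere_zero_iff_norm,
      affineMulAddMulConj_apply, phiEllipseForm_exp_add_mulAddMulConj,
      show (9 : ℝ) = 36 * (1 / 2) ^ 2 by norm_num, mul_right_inj' (by norm_num),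
      sq_eq_sq₀ (norm_nonneg a) (by norm_num)]
end

section
/- With α(X,Y) = 16X² - 16Y² - 40X + 16, β(X,Y) = 32XY - 40Y, γ(X,Y) = 20X² + 20Y² - 32X + 11, the identity α² + β² - γ² = -(16X⁴ + 32X²Y² + 16Y⁴ - 72X² - 72Y² + 64X - 15)·c holds for some nonzero real constant c; equivalently, α(X,Y)² + β(X,Y)² = γ(X,Y)² if and only if 16X⁴ + 32X²Y² + 16Y⁴ - 72X² - 72Y² + 64X - 15 = 0. -/
theorem envelope_identity :
    (∃ c : ℝ, c ≠ 0 ∧ ∀ X Y : ℝ,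
        (16 * X ^ 2 - 16 * Y ^ 2 - 40 * X + 16) ^ 2 + (32 * X * Y - 40 * Y) ^ 2
            - (20 * X ^ 2 + 20 * Y ^ 2 - 32 * X + 11) ^ 2 =
          -(16 * X ^ 4 + 32 * X ^ 2 * Y ^ 2 + 16 * Y ^ 4
              - 72 * X ^ 2 - 72 * Y ^ 2 + 64 * X - 15) * c) ∧
    (∀ X Y : ℝ,
        (16 * X ^ 2 - 16 * Y ^ 2 - 40 * X + 16) ^ 2 + (32 * X * Y - 40 * Y) ^ 2 =
            (20 * X ^ 2 + 20 * Y ^ 2 - 32 * X + 11) ^ 2 ↔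
          16 * X ^ 4 + 32 * X ^ 2 * Y ^ 2 + 16 * Y ^ 4
              - 72 * X ^ 2 - 72 * Y ^ 2 + 64 * X - 15 = 0) := by
  constructor
  · exact ⟨9, by norm_num, fun X Y => by ring⟩
  · intro X Y
    constructor
    · intro h
      have key : (16 * X ^ 4 + 32 * X ^ 2 * Y ^ 2 + 16 * Y ^ 4
          - 72 * X ^ 2 - 72 * Y ^ 2 + 64 * X - 15) * 9 = 0 := by linear_combination -h
      linarith
    · intro h
      linear_combination (-9 : ℝ) * h
end
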